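/- If (X₁,Y₁) is independent of (X₂,Y₂), then the tension region tensorizes: 𝔗(X₁X₂; Y₁Y₂) = 𝔗(X₁;Y₁) + 𝔗(X₂;Y₂), where + denotes Minkowski sum. -/

import Mathlib

namespace Paper

open Classical in
/-- Probability of an event under a pmf `μ` on a finite sample space. -/
noncomputable def pe {Ω : Type*} [Fintype Ω] (μ : Ω → ℝ) (E : Ω → Prop) : ℝ :=
  ∑ ω, if E ω then μ ω else 0

/-- Probability that random variable `X` takes value `a`. -/
noncomputable def prob {Ω α : Type*} [Fintype Ω] (μ : Ω → ℝ) (X : Ω → α) (a : α) : ℝ :=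
  pe μ (fun ω => X ω = a)

/-- `μ` is a probability mass function. -/
def IsPMF {Ω : Type*} [Fintype Ω] (μ : Ω → ℝ) : Prop :=
  (∀ ω, 0 ≤ μ ω) ∧ ∑ ω, μ ω = 1

open Classical in
/-- Shannon entropy (in bits) of the random variable `X` under `μ`. -/
noncomputable def H {Ω α : Type*} [Fintype Ω] (μ : Ω → ℝ) (X : Ω → α) : ℝ :=
  -∑ a ∈ Finset.univ.image X, prob μ X a * Real.logb 2 (prob μ X a)

/-- Mutual information `I(X;Y)` in bits. -/
noncomputable def mutInfo {Ω α β : Type*} [Fintype Ω] (μ : Ω → ℝ)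
    (X : Ω → α) (Y : Ω → β) : ℝ :=
  H μ X + H μ Y - H μ (fun ω => (X ω, Y ω))

/-- Conditional entropy `H(X|Y)` in bits. -/
noncomputable def condEnt {Ω α β : Type*} [Fintype Ω] (μ : Ω → ℝ)
    (X : Ω → α) (Y : Ω → β) : ℝ :=
  H μ (fun ω => (X ω, Y ω)) - H μ Y

/-- Conditional mutual information `I(X;Y|Z)` in bits. -/
noncomputable def condMutInfo {Ω α β γ : Type*} [Fintype Ω] (μ : Ω → ℝ)
    (X : Ω → α) (Y : Ω → β) (Z : Ω → γ) : ℝ :=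
  H μ (fun ω => (X ω, Z ω)) + H μ (fun ω => (Y ω, Z ω))
    - H μ (fun ω => (X ω, Y ω, Z ω)) - H μ Z

end Paper
namespace Paper

/-- The tension region `𝔗(X;Y) ⊆ ℝ₊³`: the set of `(r₁,r₂,r₃)` such that some
`Q` (on a finite alphabet, wlog `Fin n`) jointly distributed with `(X,Y)`
satisfies `I(Y;Q|X) ≤ r₁`, `I(X;Q|Y) ≤ r₂`, `I(X;Y|Q) ≤ r₃`. -/
def Rtens {𝒳 𝒴 : Type} [Fintype 𝒳] [Fintype 𝒴] (μ : 𝒳 × 𝒴 → ℝ) :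
    Set (ℝ × ℝ × ℝ) :=
  {r | 0 ≤ r.1 ∧ 0 ≤ r.2.1 ∧ 0 ≤ r.2.2 ∧
    ∃ (n : ℕ) (ν : 𝒳 × 𝒴 × Fin n → ℝ), IsPMF ν ∧
      (∀ a b, (∑ q, ν (a, b, q)) = μ (a, b)) ∧
      condMutInfo ν (fun w => w.2.1) (fun w => w.2.2) (fun w => w.1) ≤ r.1 ∧
      condMutInfo ν (fun w => w.1) (fun w => w.2.2) (fun w => w.2.1) ≤ r.2.1 ∧
      condMutInfo ν (fun w => w.1) (fun w => w.2.1) (fun w => w.2.2) ≤ r.2.2}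

end Paper

/-!
`⊇`: running independent channels on the two components gives a product distribution, under
which entropies, hence conditional mutual informations, add up.

`⊆`: given a channel `Q` for `(X₁X₂, Y₁Y₂)`, use `Q` for `(X₁, Y₁)` and `(Q, X₁, Y₁)` for
`(X₂, Y₂)`. Independence gives the Markov chains `Y₁ - X₁ - X₂` and `Y₂ - X₂ - X₁Y₁` (and the same
with `X` and `Y` exchanged); with the chain rule and nonnegativity of conditional mutual
information they yield `I(Y₁;Q|X₁) + I(Y₂;QX₁Y₁|X₂) ≤ I(Y₁Y₂;Q|X₁X₂)`, likewise for the second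
coordinate, and for the third coordinate even without independence. As the regions are upward
closed, what is left of `r` after the first triple lies in the second region.

Nonnegativity of `I(A;B|C)` is Gibbs' inequality: it is the mean of `log x` for
`x = p(a,b,c) p(c) / (p(a,c) p(b,c))`, whose inverse has mean at most `1`.
-/

namespace Paper

open Finset Real

section Law

variable {Ω Ω' α β γ : Type*} [Fintype Ω] {μ : Ω → ℝ}

lemma prob_nonneg (hμ : ∀ ω, 0 ≤ μ ω) (X : Ω → α) (a : α) : 0 ≤ prob μ X a :=
  sum_nonneg fun ω _ => by split_ifs <;> simp [hμ ω]

lemma le_prob_self (hμ : ∀ ω, 0 ≤ μ ω) (X : Ω → α) (ω : Ω) : μ ω ≤ prob μ X (X ω) := by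
  classical
  simpa [prob, pe] using single_le_sum (f := fun ω' => if X ω' = X ω then μ ω' else 0)
    (fun ω' _ => by split_ifs <;> simp [hμ ω']) (mem_univ ω)

lemma prob_congr {X : Ω → α} {Y : Ω → β} {a : α} {b : β} (h : ∀ ω, X ω = a ↔ Y ω = b) :
    prob μ X a = prob μ Y b := by
  classical
  exact sum_congr rfl fun ω _ => if_congr (h ω) rfl rfl

lemma prob_equiv (μ : Ω → ℝ) (e : Ω ≃ Ω') (x : Ω') : prob μ e x = μ (e.symm x) := by
  classical
  simp only [prob, pe, ← Equiv.eq_symm_apply, sum_ite_eq', mem_univ, if_true]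

lemma prob_id (μ : Ω → ℝ) (x : Ω) : prob μ id x = μ x :=
  prob_equiv μ (Equiv.refl Ω) x

lemma sum_prob_mul (μ : Ω → ℝ) (X : Ω → α) (F : α → ℝ) {S : Finset α} (hS : ∀ ω, X ω ∈ S) :
    ∑ a ∈ S, prob μ X a * F a = ∑ ω, μ ω * F (X ω) := by
  classical
  simp only [prob, pe, sum_mul, ite_mul, zero_mul]
  rw [sum_comm]
  exact sum_congr rfl fun ω _ => by rw [sum_ite_eq S (X ω), if_pos (hS ω)]

lemma sum_prob (μ : Ω → ℝ) (X : Ω → α) {S : Finset α} (hS : ∀ ω, X ω ∈ S) :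
    ∑ a ∈ S, prob μ X a = ∑ ω, μ ω := by
  simpa using sum_prob_mul μ X (fun _ => 1) hS

lemma sum_prob_pair (μ : Ω → ℝ) (B : Ω → β) (C : Ω → γ) {S : Finset β} (hS : ∀ ω, B ω ∈ S)
    (c : γ) : ∑ b ∈ S, prob μ (fun ω => (B ω, C ω)) (b, c) = prob μ C c := by
  classical
  simp only [prob, pe, Prod.mk.injEq]
  rw [sum_comm]
  refine sum_congr rfl fun ω _ => ?_
  by_cases hc : C ω = c <;> simp [hc, hS ω]

/- `prob ν T` is the law of `T`, a pmf on the codomain; it plays the role of a pushforward. -/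
lemma isPMF_prob [Fintype Ω'] {ν : Ω → ℝ} (hν : IsPMF ν) (T : Ω → Ω') : IsPMF (prob ν T) :=
  ⟨prob_nonneg hν.1 T, (sum_prob ν T fun _ => mem_univ _).trans hν.2⟩

lemma prob_prob [Fintype Ω'] (μ : Ω → ℝ) (T : Ω → Ω') (f : Ω' → α) (a : α) :
    prob (prob μ T) f a = prob μ (fun ω => f (T ω)) a := by
  classical
  simpa [prob, pe] using sum_prob_mul μ T (fun ω' => if f ω' = a then 1 else 0)
    (S := univ) fun _ => mem_univ _

lemma H_eq_sum (μ : Ω → ℝ) (X : Ω → α) :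
    H μ X = -∑ ω, μ ω * logb 2 (prob μ X (X ω)) := by
  classical
  rw [H, sum_prob_mul μ X (fun a => logb 2 (prob μ X a)) fun ω => mem_image_of_mem X (mem_univ ω)]

lemma H_congr {X : Ω → α} {Y : Ω → β} (h : ∀ ω ω', X ω' = X ω ↔ Y ω' = Y ω) :
    H μ X = H μ Y := by
  simp only [H_eq_sum, prob_congr (h _)]

lemma H_prob [Fintype Ω'] (μ : Ω → ℝ) (T : Ω → Ω') (f : Ω' → α) :
    H (prob μ T) f = H μ (fun ω => f (T ω)) := by
  rw [H_eq_sum, H_eq_sum, sum_prob_mul μ T _ (S := univ) fun _ => mem_univ _]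
  simp only [prob_prob]

lemma condMutInfo_prob [Fintype Ω'] (μ : Ω → ℝ) (T : Ω → Ω') (A : Ω' → α) (B : Ω' → β)
    (C : Ω' → γ) :
    condMutInfo (prob μ T) A B C
      = condMutInfo μ (fun ω => A (T ω)) (fun ω => B (T ω)) (fun ω => C (T ω)) := by
  simp only [condMutInfo, H_prob]

lemma prob_comp_of_prob_eq [Fintype Ω'] {Ω'' : Type*} [Fintype Ω''] {μ'' : Ω'' → ℝ}
    {T : Ω → Ω'} {T'' : Ω'' → Ω'} (h : prob μ T = prob μ'' T'') (f : Ω' → α) (a : α) :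
    prob μ (fun ω => f (T ω)) a = prob μ'' (fun ω => f (T'' ω)) a := by
  rw [← prob_prob, h, prob_prob]

lemma condMutInfo_comp_of_prob_eq [Fintype Ω'] {Ω'' : Type*} [Fintype Ω''] {μ'' : Ω'' → ℝ}
    {T : Ω → Ω'} {T'' : Ω'' → Ω'} (h : prob μ T = prob μ'' T'') (A : Ω' → α) (B : Ω' → β)
    (C : Ω' → γ) :
    condMutInfo μ (fun ω => A (T ω)) (fun ω => B (T ω)) (fun ω => C (T ω))
      = condMutInfo μ'' (fun ω => A (T'' ω)) (fun ω => B (T'' ω)) (fun ω => C (T'' ω)) := by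
  rw [← condMutInfo_prob, h, condMutInfo_prob]

end Law

section Algebra

variable {Ω α β γ δ α' β' γ' : Type*} [Fintype Ω] (μ : Ω → ℝ)

lemma condMutInfo_congr {A : Ω → α} {B : Ω → β} {C : Ω → γ} {A' : Ω → α'} {B' : Ω → β'}
    {C' : Ω → γ'} (hA : ∀ ω ω', A ω' = A ω ↔ A' ω' = A' ω)
    (hB : ∀ ω ω', B ω' = B ω ↔ B' ω' = B' ω) (hC : ∀ ω ω', C ω' = C ω ↔ C' ω' = C' ω) :
    condMutInfo μ A B C = condMutInfo μ A' B' C' := by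
  refine congrArg₂ (· - ·) (congrArg₂ (· - ·) (congrArg₂ (· + ·) ?_ ?_) ?_) ?_ <;>
  exact H_congr fun _ _ => by simp [hA, hB, hC]

lemma condMutInfo_comm (A : Ω → α) (B : Ω → β) (C : Ω → γ) :
    condMutInfo μ A B C = condMutInfo μ B A C := by
  have : H μ (fun ω => (A ω, B ω, C ω)) = H μ (fun ω => (B ω, A ω, C ω)) :=
    H_congr fun _ _ => by simp only [Prod.mk.injEq]; tauto
  simp only [condMutInfo, this]
  ring

lemma condMutInfo_pair_right (A : Ω → α) (B : Ω → β) (C : Ω → γ) (D : Ω → δ) :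
    condMutInfo μ A (fun ω => (B ω, C ω)) D
      = condMutInfo μ A B D + condMutInfo μ A C (fun ω => (B ω, D ω)) := by
  have h₁ : H μ (fun ω => ((B ω, C ω), D ω)) = H μ (fun ω => (C ω, B ω, D ω)) :=
    H_congr fun _ _ => by simp only [Prod.mk.injEq]; tauto
  have h₂ : H μ (fun ω => (A ω, (B ω, C ω), D ω)) = H μ (fun ω => (A ω, C ω, B ω, D ω)) :=
    H_congr fun _ _ => by simp only [Prod.mk.injEq]; tauto
  simp only [condMutInfo, h₁, h₂]
  ring

lemma condMutInfo_pair_left (A : Ω → α) (B : Ω → β) (C : Ω → γ) (D : Ω → δ) :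
    condMutInfo μ (fun ω => (A ω, B ω)) C D
      = condMutInfo μ A C D + condMutInfo μ B C (fun ω => (A ω, D ω)) := by
  rw [condMutInfo_comm, condMutInfo_pair_right, condMutInfo_comm μ C, condMutInfo_comm μ C]

lemma condMutInfo_const_right (A : Ω → α) (b : β) (C : Ω → γ) :
    condMutInfo μ A (fun _ => b) C = 0 := by
  have h₁ : H μ (fun ω => (b, C ω)) = H μ C := H_congr fun _ _ => by simp
  have h₂ : H μ (fun ω => (A ω, b, C ω)) = H μ (fun ω => (A ω, C ω)) :=
    H_congr fun _ _ => by simp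
  simp only [condMutInfo, h₁, h₂]
  ring

lemma condMutInfo_const_left (a : α) (B : Ω → β) (C : Ω → γ) :
    condMutInfo μ (fun _ => a) B C = 0 := by
  rw [condMutInfo_comm, condMutInfo_const_right]

end Algebra

section Nonneg

variable {Ω α β γ : Type*} [Fintype Ω] {μ : Ω → ℝ}

lemma prob_self_pos (hμ : ∀ ω, 0 ≤ μ ω) (X : Ω → α) {ω : Ω} (h : 0 < μ ω) :
    0 < prob μ X (X ω) :=
  h.trans_le (le_prob_self hμ X ω)

lemma sum_mul_logb_nonneg {w x : Ω → ℝ} (hw : ∀ ω, 0 ≤ w ω) (hx : ∀ ω, 0 < w ω → 0 < x ω)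
    (h : ∑ ω, w ω * (x ω)⁻¹ ≤ ∑ ω, w ω) : 0 ≤ ∑ ω, w ω * logb 2 (x ω) := by
  have hterm : ∀ ω, (w ω - w ω * (x ω)⁻¹) / log 2 ≤ w ω * logb 2 (x ω) := by
    intro ω
    rcases (hw ω).eq_or_lt with h0 | hpos
    · simp [← h0]
    rw [logb, ← mul_div_assoc, ← mul_one_sub]
    gcongr
    exact one_sub_inv_le_log_of_pos (hx ω hpos)
  calc 0 ≤ (∑ ω, w ω - ∑ ω, w ω * (x ω)⁻¹) / log 2 :=
        div_nonneg (sub_nonneg.2 h) (log_nonneg one_le_two)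
    _ = ∑ ω, (w ω - w ω * (x ω)⁻¹) / log 2 := by rw [← sum_sub_distrib, sum_div]
    _ ≤ _ := sum_le_sum fun ω _ => hterm ω

lemma condMutInfo_eq_sum (hμ : ∀ ω, 0 ≤ μ ω) (A : Ω → α) (B : Ω → β) (C : Ω → γ) :
    condMutInfo μ A B C = ∑ ω, μ ω * logb 2
      (prob μ (fun ω => (A ω, B ω, C ω)) (A ω, B ω, C ω) * prob μ C (C ω)
        / (prob μ (fun ω => (A ω, C ω)) (A ω, C ω) * prob μ (fun ω => (B ω, C ω)) (B ω, C ω))) := by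
  simp only [condMutInfo, H_eq_sum, ← sum_neg_distrib, ← sum_sub_distrib, ← sum_add_distrib]
  refine sum_congr rfl fun ω _ => ?_
  rcases (hμ ω).eq_or_lt with h | h
  · simp [← h]
  have hABC := (prob_self_pos hμ (fun ω => (A ω, B ω, C ω)) h).ne'
  have hAC := (prob_self_pos hμ (fun ω => (A ω, C ω)) h).ne'
  have hBC := (prob_self_pos hμ (fun ω => (B ω, C ω)) h).ne'
  have hC := (prob_self_pos hμ C h).ne'
  rw [logb_div (mul_ne_zero hABC hC) (mul_ne_zero hAC hBC), logb_mul hABC hC, logb_mul hAC hBC]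
  ring

lemma sum_mul_prob_div_le (hμ : ∀ ω, 0 ≤ μ ω) (A : Ω → α) (B : Ω → β) (C : Ω → γ) :
    ∑ ω, μ ω * (prob μ (fun ω => (A ω, C ω)) (A ω, C ω) * prob μ (fun ω => (B ω, C ω)) (B ω, C ω)
      / (prob μ (fun ω => (A ω, B ω, C ω)) (A ω, B ω, C ω) * prob μ C (C ω))) ≤ ∑ ω, μ ω := by
  classical
  set sA := univ.image A
  set sB := univ.image B
  set sC := univ.image C
  have hA : ∀ ω, A ω ∈ sA := fun ω => mem_image_of_mem A (mem_univ ω)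
  have hB : ∀ ω, B ω ∈ sB := fun ω => mem_image_of_mem B (mem_univ ω)
  have hC : ∀ ω, C ω ∈ sC := fun ω => mem_image_of_mem C (mem_univ ω)
  set pAC := fun a c => prob μ (fun ω => (A ω, C ω)) (a, c)
  set pBC := fun b c => prob μ (fun ω => (B ω, C ω)) (b, c)
  set pC := prob μ C
  have hpAC : ∀ a c, 0 ≤ pAC a c := fun _ _ => prob_nonneg hμ _ _
  have hpBC : ∀ b c, 0 ≤ pBC b c := fun _ _ => prob_nonneg hμ _ _
  calc _ = ∑ t ∈ sA ×ˢ sB ×ˢ sC, prob μ (fun ω => (A ω, B ω, C ω)) t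
          * (pAC t.1 t.2.2 * pBC t.2.1 t.2.2 / (prob μ (fun ω => (A ω, B ω, C ω)) t * pC t.2.2)) :=
        (sum_prob_mul μ _ (fun t => _) fun ω =>
          mem_product.2 ⟨hA ω, mem_product.2 ⟨hB ω, hC ω⟩⟩).symm
    _ ≤ ∑ t ∈ sA ×ˢ sB ×ˢ sC, pAC t.1 t.2.2 * pBC t.2.1 t.2.2 / pC t.2.2 := by
        refine sum_le_sum fun t _ => ?_
        rcases eq_or_ne (prob μ (fun ω => (A ω, B ω, C ω)) t) 0 with hp | hp
        · rw [hp, zero_mul]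
          exact div_nonneg (mul_nonneg (hpAC _ _) (hpBC _ _)) (prob_nonneg hμ C _)
        · rw [← mul_div_assoc, mul_div_mul_left _ _ hp]
    _ = ∑ a ∈ sA, ∑ c ∈ sC, pAC a c * (∑ b ∈ sB, pBC b c / pC c) := by
        simp only [sum_product, mul_sum, mul_div_assoc]
        exact sum_congr rfl fun a _ => sum_comm
    _ ≤ ∑ a ∈ sA, ∑ c ∈ sC, pAC a c := by
        refine sum_le_sum fun a _ => sum_le_sum fun c _ => ?_
        rw [← sum_div, sum_prob_pair μ B C hB]
        exact mul_le_of_le_one_right (hpAC a c) (div_self_le_one _)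
    _ = ∑ ω, μ ω := by
        rw [← sum_product' (f := pAC)]
        exact sum_prob μ _ fun ω => mem_product.2 ⟨hA ω, hC ω⟩

lemma condMutInfo_nonneg (hμ : ∀ ω, 0 ≤ μ ω) (A : Ω → α) (B : Ω → β) (C : Ω → γ) :
    0 ≤ condMutInfo μ A B C := by
  rw [condMutInfo_eq_sum hμ]
  refine sum_mul_logb_nonneg hμ (fun ω h => ?_)
    (by simpa only [inv_div] using sum_mul_prob_div_le hμ A B C)
  have := prob_self_pos hμ (fun ω => (A ω, B ω, C ω)) h
  have := prob_self_pos hμ (fun ω => (A ω, C ω)) h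
  have := prob_self_pos hμ (fun ω => (B ω, C ω)) h
  have := prob_self_pos hμ C h
  positivity

end Nonneg

section Product

variable {Ω₁ Ω₂ α β γ α' β' γ' : Type*} [Fintype Ω₁] [Fintype Ω₂] {m₁ : Ω₁ → ℝ} {m₂ : Ω₂ → ℝ}

lemma isPMF_prod (h₁ : IsPMF m₁) (h₂ : IsPMF m₂) : IsPMF fun ω : Ω₁ × Ω₂ => m₁ ω.1 * m₂ ω.2 :=
  ⟨fun ω => mul_nonneg (h₁.1 ω.1) (h₂.1 ω.2), by
    rw [Fintype.sum_prod_type, ← h₁.2]; simp [← mul_sum, h₂.2]⟩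

lemma prob_prod (m₁ : Ω₁ → ℝ) (m₂ : Ω₂ → ℝ) (X₁ : Ω₁ → α) (X₂ : Ω₂ → β) (a : α) (b : β) :
    prob (fun ω : Ω₁ × Ω₂ => m₁ ω.1 * m₂ ω.2) (fun ω => (X₁ ω.1, X₂ ω.2)) (a, b)
      = prob m₁ X₁ a * prob m₂ X₂ b := by
  classical
  simp only [prob, pe, Fintype.sum_prod_type, sum_mul_sum, Prod.mk.injEq, ite_and]
  refine sum_congr rfl fun ω₁ _ => sum_congr rfl fun ω₂ _ => ?_
  split_ifs <;> simp

lemma prob_prod_fst (m₁ : Ω₁ → ℝ) (h₂ : IsPMF m₂) (x : Ω₁) :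
    prob (fun ω : Ω₁ × Ω₂ => m₁ ω.1 * m₂ ω.2) Prod.fst x = m₁ x := by
  rw [prob_congr (Y := fun ω : Ω₁ × Ω₂ => (id ω.1, ())) (b := (x, ())) fun _ => by simp,
    prob_prod m₁ m₂ id fun _ => (), prob_id]
  simp [prob, pe, h₂.2]

lemma prob_prod_snd (h₁ : IsPMF m₁) (m₂ : Ω₂ → ℝ) (x : Ω₂) :
    prob (fun ω : Ω₁ × Ω₂ => m₁ ω.1 * m₂ ω.2) Prod.snd x = m₂ x := by
  rw [prob_congr (Y := fun ω : Ω₁ × Ω₂ => ((), id ω.2)) (b := ((), x)) fun _ => by simp,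
    prob_prod m₁ m₂ (fun _ => ()) id, prob_id]
  simp [prob, pe, h₁.2]

lemma H_prod (h₁ : IsPMF m₁) (h₂ : IsPMF m₂) (X₁ : Ω₁ → α) (X₂ : Ω₂ → β) :
    H (fun ω : Ω₁ × Ω₂ => m₁ ω.1 * m₂ ω.2) (fun ω => (X₁ ω.1, X₂ ω.2)) = H m₁ X₁ + H m₂ X₂ := by
  have hterm : ∀ ω₁ ω₂, m₁ ω₁ * m₂ ω₂ * logb 2 (prob m₁ X₁ (X₁ ω₁) * prob m₂ X₂ (X₂ ω₂))
      = m₁ ω₁ * logb 2 (prob m₁ X₁ (X₁ ω₁)) * m₂ ω₂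
        + m₁ ω₁ * (m₂ ω₂ * logb 2 (prob m₂ X₂ (X₂ ω₂))) := by
    intro ω₁ ω₂
    rcases (h₁.1 ω₁).eq_or_lt with h | h₁pos
    · simp [← h]
    rcases (h₂.1 ω₂).eq_or_lt with h | h₂pos
    · simp [← h]
    rw [logb_mul (prob_self_pos h₁.1 X₁ h₁pos).ne' (prob_self_pos h₂.1 X₂ h₂pos).ne']
    ring
  rw [H_eq_sum, H_eq_sum, H_eq_sum, Fintype.sum_prod_type]
  simp only [prob_prod, hterm, sum_add_distrib, ← sum_mul, ← mul_sum, h₁.2, h₂.2]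
  ring

lemma condMutInfo_prod (h₁ : IsPMF m₁) (h₂ : IsPMF m₂) (A₁ : Ω₁ → α) (B₁ : Ω₁ → β)
    (C₁ : Ω₁ → γ) (A₂ : Ω₂ → α') (B₂ : Ω₂ → β') (C₂ : Ω₂ → γ') :
    condMutInfo (fun ω : Ω₁ × Ω₂ => m₁ ω.1 * m₂ ω.2)
      (fun ω => (A₁ ω.1, A₂ ω.2)) (fun ω => (B₁ ω.1, B₂ ω.2)) (fun ω => (C₁ ω.1, C₂ ω.2))
    = condMutInfo m₁ A₁ B₁ C₁ + condMutInfo m₂ A₂ B₂ C₂ := by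
  unfold condMutInfo
  rw [(H_congr ?_).trans (H_prod h₁ h₂ (fun ω => (A₁ ω, C₁ ω)) (fun ω => (A₂ ω, C₂ ω))),
    (H_congr ?_).trans (H_prod h₁ h₂ (fun ω => (B₁ ω, C₁ ω)) (fun ω => (B₂ ω, C₂ ω))),
    (H_congr ?_).trans (H_prod h₁ h₂ (fun ω => (A₁ ω, B₁ ω, C₁ ω)) (fun ω => (A₂ ω, B₂ ω, C₂ ω))),
    H_prod h₁ h₂ C₁ C₂]
  · ring
  all_goals intro ω ω'; simp only [Prod.mk.injEq]; tauto

lemma condMutInfo_prod_left_eq_zero (h₁ : IsPMF m₁) (h₂ : IsPMF m₂) (U : Ω₁ → α) (V : Ω₂ → β)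
    (W : Ω₁ → γ) :
    condMutInfo (fun ω : Ω₁ × Ω₂ => m₁ ω.1 * m₂ ω.2) (fun ω => U ω.1) (fun ω => V ω.2)
      (fun ω => W ω.1) = 0 := by
  rw [condMutInfo_congr _ (A' := fun ω => (U ω.1, ())) (B' := fun ω => ((), V ω.2))
      (C' := fun ω => (W ω.1, ())) (by simp) (by simp) (by simp),
    condMutInfo_prod h₁ h₂ U (fun _ => ()) W (fun _ => ()) V (fun _ => ()),
    condMutInfo_const_right, condMutInfo_const_left, add_zero]

lemma condMutInfo_prod_right_eq_zero (h₁ : IsPMF m₁) (h₂ : IsPMF m₂) (U : Ω₂ → α) (V : Ω₁ → β)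
    (W : Ω₂ → γ) :
    condMutInfo (fun ω : Ω₁ × Ω₂ => m₁ ω.1 * m₂ ω.2) (fun ω => U ω.2) (fun ω => V ω.1)
      (fun ω => W ω.2) = 0 := by
  rw [condMutInfo_congr _ (A' := fun ω => ((), U ω.2)) (B' := fun ω => (V ω.1, ()))
      (C' := fun ω => ((), W ω.2)) (by simp) (by simp) (by simp),
    condMutInfo_prod h₁ h₂ (fun _ => ()) V (fun _ => ()) U (fun _ => ()) W,
    condMutInfo_const_right, condMutInfo_const_left, add_zero]

end Product

section Superadditivity

variable {Ω α β γ δ ε : Type*} [Fintype Ω] {μ : Ω → ℝ}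

lemma condMutInfo_pair_right_eq_cond {A : Ω → α} {C : Ω → γ} {D : Ω → δ}
    (h : condMutInfo μ A D C = 0) (B : Ω → β) :
    condMutInfo μ A (fun ω => (B ω, D ω)) C = condMutInfo μ A B (fun ω => (C ω, D ω)) := by
  calc _ = condMutInfo μ A (fun ω => (D ω, B ω)) C :=
        condMutInfo_congr μ (by simp) (fun _ _ => by simp only [Prod.mk.injEq]; tauto) (by simp)
    _ = condMutInfo μ A B (fun ω => (D ω, C ω)) := by rw [condMutInfo_pair_right, h, zero_add]
    _ = _ := condMutInfo_congr μ (by simp) (by simp) fun _ _ => by simp only [Prod.mk.injEq]; tauto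

lemma condMutInfo_le_cond_pair (hμ : ∀ ω, 0 ≤ μ ω) {A : Ω → α} {C : Ω → γ} {D : Ω → δ}
    (h : condMutInfo μ A D C = 0) (B : Ω → β) :
    condMutInfo μ A B C ≤ condMutInfo μ A B (fun ω => (C ω, D ω)) := by
  rw [← condMutInfo_pair_right_eq_cond h, condMutInfo_pair_right]
  exact le_add_of_nonneg_right (condMutInfo_nonneg hμ _ _ _)

variable (X₁ : Ω → α) (X₂ : Ω → β) (Y₁ : Ω → γ) (Y₂ : Ω → δ) (Q : Ω → ε)

lemma add_le_condMutInfo_pair_cond_pair (hμ : ∀ ω, 0 ≤ μ ω) (h₁ : condMutInfo μ Y₁ X₂ X₁ = 0)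
    (h₂ : condMutInfo μ Y₂ (fun ω => (X₁ ω, Y₁ ω)) X₂ = 0) :
    condMutInfo μ Y₁ Q X₁ + condMutInfo μ Y₂ (fun ω => (Q ω, X₁ ω, Y₁ ω)) X₂
      ≤ condMutInfo μ (fun ω => (Y₁ ω, Y₂ ω)) Q (fun ω => (X₁ ω, X₂ ω)) := by
  rw [condMutInfo_pair_left, condMutInfo_pair_right_eq_cond h₂]
  refine add_le_add (condMutInfo_le_cond_pair hμ h₁ Q)
    (condMutInfo_congr μ (by simp) (by simp) fun _ _ => ?_).le
  simp only [Prod.mk.injEq]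
  tauto

lemma add_le_condMutInfo_pair_pair (hμ : ∀ ω, 0 ≤ μ ω) :
    condMutInfo μ X₁ Y₁ Q + condMutInfo μ X₂ Y₂ (fun ω => (Q ω, X₁ ω, Y₁ ω))
      ≤ condMutInfo μ (fun ω => (X₁ ω, X₂ ω)) (fun ω => (Y₁ ω, Y₂ ω)) Q := by
  have hcond : condMutInfo μ X₂ Y₂ (fun ω => (Q ω, X₁ ω, Y₁ ω))
      = condMutInfo μ X₂ Y₂ (fun ω => (Y₁ ω, X₁ ω, Q ω)) :=
    condMutInfo_congr μ (by simp) (by simp) fun _ _ => by simp only [Prod.mk.injEq]; tauto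
  rw [condMutInfo_pair_left, condMutInfo_pair_right, condMutInfo_pair_right μ X₂, hcond]
  linarith [condMutInfo_nonneg hμ X₁ Y₂ fun ω => (Y₁ ω, Q ω),
    condMutInfo_nonneg hμ X₂ Y₁ fun ω => (X₁ ω, Q ω)]

end Superadditivity

section Tension

lemma prob_proj₁₂ {α β γ : Type*} [Fintype α] [Fintype β] [Fintype γ] (ν : α × β × γ → ℝ)
    (a : α) (b : β) : prob ν (fun w => (w.1, w.2.1)) (a, b) = ∑ c, ν (a, b, c) := by
  rw [← sum_prob_pair ν (fun w => w.2.2) _ (S := univ) fun _ => mem_univ _]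
  refine sum_congr rfl fun c _ => ?_
  rw [← prob_id ν]
  exact prob_congr fun w => by simp only [Prod.ext_iff, id]; tauto

variable {𝒳 𝒴 : Type} [Fintype 𝒳] [Fintype 𝒴] {μ : 𝒳 × 𝒴 → ℝ}

lemma mem_Rtens_of_coupling {Ω 𝒬 : Type*} [Fintype Ω] [Fintype 𝒬] {ν : Ω → ℝ} (hν : IsPMF ν)
    {X : Ω → 𝒳} {Y : Ω → 𝒴} (hXY : ∀ a b, prob ν (fun ω => (X ω, Y ω)) (a, b) = μ (a, b))
    (Q : Ω → 𝒬) {r : ℝ × ℝ × ℝ} (h₁ : condMutInfo ν Y Q X ≤ r.1)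
    (h₂ : condMutInfo ν X Q Y ≤ r.2.1) (h₃ : condMutInfo ν X Y Q ≤ r.2.2) : r ∈ Rtens μ := by
  set e := Fintype.equivFin 𝒬
  have he : ∀ ω ω', e (Q ω') = e (Q ω) ↔ Q ω' = Q ω := fun _ _ => e.injective.eq_iff
  refine ⟨(condMutInfo_nonneg hν.1 _ _ _).trans h₁, (condMutInfo_nonneg hν.1 _ _ _).trans h₂,
    (condMutInfo_nonneg hν.1 _ _ _).trans h₃, Fintype.card 𝒬,
    prob ν fun ω => (X ω, Y ω, e (Q ω)), isPMF_prob hν _, fun a b => ?_, ?_, ?_, ?_⟩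
  · rw [← hXY, ← sum_prob_pair ν (fun ω => e (Q ω)) _ (S := univ) fun _ => mem_univ _]
    exact sum_congr rfl fun q _ => prob_congr fun ω => by simp only [Prod.mk.injEq]; tauto
  · rw [condMutInfo_prob]
    exact (condMutInfo_congr ν (by simp) he (by simp)).trans_le h₁
  · rw [condMutInfo_prob]
    exact (condMutInfo_congr ν (by simp) he (by simp)).trans_le h₂
  · rw [condMutInfo_prob]
    exact (condMutInfo_congr ν (by simp) (by simp) he).trans_le h₃

end Tension

section Tensorization

variable {𝒳₁ 𝒴₁ 𝒳₂ 𝒴₂ : Type} [Fintype 𝒳₁] [Fintype 𝒴₁] [Fintype 𝒳₂] [Fintype 𝒴₂]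
  {μ₁ : 𝒳₁ × 𝒴₁ → ℝ} {μ₂ : 𝒳₂ × 𝒴₂ → ℝ}

open Pointwise in
lemma add_Rtens_subset : Rtens μ₁ + Rtens μ₂
    ⊆ Rtens fun p : (𝒳₁ × 𝒳₂) × (𝒴₁ × 𝒴₂) => μ₁ (p.1.1, p.2.1) * μ₂ (p.1.2, p.2.2) := by
  rintro _ ⟨u, ⟨-, -, -, n₁, ν₁, hν₁, hνμ₁, hu₁, hu₂, hu₃⟩,
    v, ⟨-, -, -, n₂, ν₂, hν₂, hνμ₂, hv₁, hv₂, hv₃⟩, rfl⟩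
  refine mem_Rtens_of_coupling (isPMF_prod hν₁ hν₂) (X := fun ω => (ω.1.1, ω.2.1))
    (Y := fun ω => (ω.1.2.1, ω.2.2.1)) (fun a b => ?_) (fun ω => (ω.1.2.2, ω.2.2.2)) ?_ ?_ ?_
  · rw [prob_congr (Y := fun ω => ((ω.1.1, ω.1.2.1), (ω.2.1, ω.2.2.1)))
      (b := ((a.1, b.1), (a.2, b.2))) fun _ => by simp only [Prod.ext_iff]; tauto,
      prob_prod ν₁ ν₂ (fun w => (w.1, w.2.1)) (fun w => (w.1, w.2.1)), prob_proj₁₂, prob_proj₁₂,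
      hνμ₁, hνμ₂]
  · exact (condMutInfo_prod hν₁ hν₂ (fun w => w.2.1) (fun w => w.2.2) (fun w => w.1)
      (fun w => w.2.1) (fun w => w.2.2) (fun w => w.1)).trans_le (add_le_add hu₁ hv₁)
  · exact (condMutInfo_prod hν₁ hν₂ (fun w => w.1) (fun w => w.2.2) (fun w => w.2.1)
      (fun w => w.1) (fun w => w.2.2) (fun w => w.2.1)).trans_le (add_le_add hu₂ hv₂)
  · exact (condMutInfo_prod hν₁ hν₂ (fun w => w.1) (fun w => w.2.1) (fun w => w.2.2)
      (fun w => w.1) (fun w => w.2.1) (fun w => w.2.2)).trans_le (add_le_add hu₃ hv₃)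

open Pointwise in
lemma mem_Rtens_add_of_coupling {Ω 𝒬 : Type*} [Fintype Ω] [Fintype 𝒬] {ν : Ω → ℝ}
    (hν : IsPMF ν) {X₁ : Ω → 𝒳₁} {X₂ : Ω → 𝒳₂} {Y₁ : Ω → 𝒴₁} {Y₂ : Ω → 𝒴₂}
    (hXY₁ : ∀ a b, prob ν (fun ω => (X₁ ω, Y₁ ω)) (a, b) = μ₁ (a, b))
    (hXY₂ : ∀ a b, prob ν (fun ω => (X₂ ω, Y₂ ω)) (a, b) = μ₂ (a, b))
    (hY₁ : condMutInfo ν Y₁ X₂ X₁ = 0) (hY₂ : condMutInfo ν Y₂ (fun ω => (X₁ ω, Y₁ ω)) X₂ = 0)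
    (hX₁ : condMutInfo ν X₁ Y₂ Y₁ = 0) (hX₂ : condMutInfo ν X₂ (fun ω => (Y₁ ω, X₁ ω)) Y₂ = 0)
    (Q : Ω → 𝒬) {r : ℝ × ℝ × ℝ}
    (h₁ : condMutInfo ν (fun ω => (Y₁ ω, Y₂ ω)) Q (fun ω => (X₁ ω, X₂ ω)) ≤ r.1)
    (h₂ : condMutInfo ν (fun ω => (X₁ ω, X₂ ω)) Q (fun ω => (Y₁ ω, Y₂ ω)) ≤ r.2.1)
    (h₃ : condMutInfo ν (fun ω => (X₁ ω, X₂ ω)) (fun ω => (Y₁ ω, Y₂ ω)) Q ≤ r.2.2) :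
    r ∈ Rtens μ₁ + Rtens μ₂ := by
  have hb₁ := (add_le_condMutInfo_pair_cond_pair X₁ X₂ Y₁ Y₂ Q hν.1 hY₁ hY₂).trans h₁
  have hb₂ := (add_le_condMutInfo_pair_cond_pair Y₁ Y₂ X₁ X₂ Q hν.1 hX₁ hX₂).trans h₂
  have hb₃ := (add_le_condMutInfo_pair_pair X₁ X₂ Y₁ Y₂ Q hν.1).trans h₃
  have hQ₂ : condMutInfo ν X₂ (fun ω => (Q ω, Y₁ ω, X₁ ω)) Y₂
      = condMutInfo ν X₂ (fun ω => (Q ω, X₁ ω, Y₁ ω)) Y₂ :=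
    condMutInfo_congr ν (by simp) (fun _ _ => by simp only [Prod.mk.injEq]; tauto) (by simp)
  rw [hQ₂] at hb₂
  refine ⟨(condMutInfo ν Y₁ Q X₁, condMutInfo ν X₁ Q Y₁, condMutInfo ν X₁ Y₁ Q),
    mem_Rtens_of_coupling hν hXY₁ Q le_rfl le_rfl le_rfl, _,
    mem_Rtens_of_coupling hν hXY₂ (fun ω => (Q ω, X₁ ω, Y₁ ω)) ?_ ?_ ?_, add_sub_cancel _ r⟩ <;>
  simp only [Prod.fst_sub, Prod.snd_sub] <;> linarith

open Pointwise in
lemma Rtens_subset_add (h₁ : IsPMF μ₁) (h₂ : IsPMF μ₂) :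
    Rtens (fun p : (𝒳₁ × 𝒳₂) × (𝒴₁ × 𝒴₂) => μ₁ (p.1.1, p.2.1) * μ₂ (p.1.2, p.2.2))
      ⊆ Rtens μ₁ + Rtens μ₂ := by
  rintro r ⟨-, -, -, n, ν, hν, hνμ, hr₁, hr₂, hr₃⟩
  have hlaw : prob ν (fun w => (w.1, w.2.1)) = prob (fun ω : (𝒳₁ × 𝒴₁) × (𝒳₂ × 𝒴₂) =>
      μ₁ ω.1 * μ₂ ω.2) (Equiv.prodProdProdComm 𝒳₁ 𝒴₁ 𝒳₂ 𝒴₂) := by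
    funext p
    rw [prob_proj₁₂, hνμ, prob_equiv]
    rfl
  refine mem_Rtens_add_of_coupling hν (X₁ := fun w => w.1.1) (X₂ := fun w => w.1.2)
    (Y₁ := fun w => w.2.1.1) (Y₂ := fun w => w.2.1.2) (fun a b => ?_) (fun a b => ?_)
    ?_ ?_ ?_ ?_ (fun w => w.2.2) hr₁ hr₂ hr₃
  · exact (prob_comp_of_prob_eq hlaw (fun p => (p.1.1, p.2.1)) (a, b)).trans
      (prob_prod_fst μ₁ h₂ (a, b))
  · exact (prob_comp_of_prob_eq hlaw (fun p => (p.1.2, p.2.2)) (a, b)).trans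
      (prob_prod_snd h₁ μ₂ (a, b))
  · exact (condMutInfo_comp_of_prob_eq hlaw (fun p => p.2.1) (fun p => p.1.2)
      (fun p => p.1.1)).trans (condMutInfo_prod_left_eq_zero h₁ h₂ Prod.snd Prod.fst Prod.fst)
  · exact (condMutInfo_comp_of_prob_eq hlaw (fun p => p.2.2) (fun p => (p.1.1, p.2.1))
      (fun p => p.1.2)).trans (condMutInfo_prod_right_eq_zero h₁ h₂ Prod.snd id Prod.fst)
  · exact (condMutInfo_comp_of_prob_eq hlaw (fun p => p.1.1) (fun p => p.2.2)
      (fun p => p.2.1)).trans (condMutInfo_prod_left_eq_zero h₁ h₂ Prod.fst Prod.snd Prod.snd)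
  · exact (condMutInfo_comp_of_prob_eq hlaw (fun p => p.1.2) (fun p => (p.2.1, p.1.1))
      (fun p => p.2.2)).trans (condMutInfo_prod_right_eq_zero h₁ h₂ Prod.fst Prod.swap Prod.snd)

end Tensorization

open Pointwise in
/-- if `(X₁,Y₁) ⟂ (X₂,Y₂)`, the tension region tensorizes:
`𝔗(X₁X₂;Y₁Y₂) = 𝔗(X₁;Y₁) + 𝔗(X₂;Y₂)` (Minkowski sum). -/
theorem rtens_tensorizes {𝒳₁ 𝒴₁ 𝒳₂ 𝒴₂ : Type}
    [Fintype 𝒳₁] [Fintype 𝒴₁] [Fintype 𝒳₂] [Fintype 𝒴₂]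
    (μ₁ : 𝒳₁ × 𝒴₁ → ℝ) (μ₂ : 𝒳₂ × 𝒴₂ → ℝ)
    (h₁ : IsPMF μ₁) (h₂ : IsPMF μ₂) :
    Rtens (fun p : (𝒳₁ × 𝒳₂) × (𝒴₁ × 𝒴₂) => μ₁ (p.1.1, p.2.1) * μ₂ (p.1.2, p.2.2))
      = Rtens μ₁ + Rtens μ₂ :=
  (Rtens_subset_add h₁ h₂).antisymm add_Rtens_subset

end Paper
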